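/- arXiv:1710.08480 — 3 statements merged into one kernel-verified Lean document; each statement's English description precedes it below -/
import Mathlib

section
/- For every n ≥ 2, the map Φ (applying the transformation table φ to the consecutive pairs of the supplemented word 0·w·0) is defined on every W-path w of order n (φ returns some value on each consecutive pair) and is a bijection from the set of W-paths of order n onto the set of S-paths of order n. -/
/-- The unit vector in direction `d·π/3`, viewing the plane as `ℂ`. -/
noncomputable def dirU (d : Fin 6) : ℂ :=
  Complex.exp ((d : ℕ) * Real.pi / 3 * Complex.I)

/-- The position sequence of a direction word: `p₀ = 0`, `p_{m+1} = p_m + dirU (ds_m)`. -/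
noncomputable def posSeq (ds : List (Fin 6)) (m : ℕ) : ℂ :=
  ((ds.take m).map dirU).sum

/-- The grid point `P(i,j) = i·u(0) + j·u(1)`. -/
noncomputable def Pt (i j : ℕ) : ℂ := (i : ℂ) * dirU 0 + (j : ℂ) * dirU 1

/-- The triangular number `T_n = n(n+1)/2`. -/
def triNum (n : ℕ) : ℕ := n * (n + 1) / 2

/-- The inscribed grid `G_n = {P(i,j) : i + j ≤ n - 1}`. -/
def inscribedGrid (n : ℕ) : Set ℂ := {p | ∃ i j : ℕ, i + j ≤ n - 1 ∧ p = Pt i j}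

/-- An H-path of order `n`: a direction word of length `T_n - 1` whose position sequence
is injective with image `G_n`, starting at `P(0,0) = 0` and ending at `P(n-1,0)`. -/
def IsHPath (n : ℕ) (w : List (Fin 6)) : Prop :=
  w.length = triNum n - 1 ∧
  (Function.Injective fun m : Fin (w.length + 1) => posSeq w m) ∧
  (Set.range fun m : Fin (w.length + 1) => posSeq w m) = inscribedGrid n ∧
  posSeq w 0 = Pt 0 0 ∧
  posSeq w w.length = Pt (n - 1) 0

/-- `(a, b)` is a forbidden turn if `b ≡ a + 4 (mod 6)` with `a` even, or
`b ≡ a + 2 (mod 6)` with `a` odd (addition in `Fin 6` is mod 6). -/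
def ForbiddenTurn (a b : Fin 6) : Prop :=
  (Even (a : ℕ) ∧ b = a + 4) ∨ (Odd (a : ℕ) ∧ b = a + 2)

/-- A W-path of order `n`: an H-path whose supplemented word `0·w·0` contains no
forbidden turn among its consecutive pairs. -/
def IsWPath (n : ℕ) (w : List (Fin 6)) : Prop :=
  IsHPath n w ∧ List.Chain' (fun a b => ¬ ForbiddenTurn a b) ((0 : Fin 6) :: (w ++ [0]))

/-- The `m`-th edge of a direction word: the closed segment `[p_m, p_{m+1}]`. -/
noncomputable def edgeSeg (s : List (Fin 6)) (m : ℕ) : Set ℂ :=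
  segment ℝ (posSeq s m) (posSeq s (m + 1))

/-- `e` is a side of the dark (upward) tile `Δ(i,j)`, i.e. one of its three closed edges. -/
def IsSideOf (e : Set ℂ) (i j : ℕ) : Prop :=
  e = segment ℝ (Pt i j) (Pt (i + 1) j) ∨
  e = segment ℝ (Pt (i + 1) j) (Pt i (j + 1)) ∨
  e = segment ℝ (Pt i j) (Pt i (j + 1))

/-- An S-path of order `n`: a direction word of length `T_n` from `0` to `n·u(0)`,
whose edges are pairwise distinct sides of dark tiles, such that the assignment of
edges to dark tiles is a bijection onto the set of dark tiles (indexed by base points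
`(i,j)` with `i + j ≤ n - 1`). -/
def IsSPath (n : ℕ) (s : List (Fin 6)) : Prop :=
  s.length = triNum n ∧
  posSeq s 0 = 0 ∧
  posSeq s s.length = (n : ℂ) * dirU 0 ∧
  (∀ m m' : Fin s.length, edgeSeg s m = edgeSeg s m' → m = m') ∧
  ∃ t : Fin s.length → {p : ℕ × ℕ // p.1 + p.2 ≤ n - 1},
    (∀ m : Fin s.length, IsSideOf (edgeSeg s (m : ℕ)) (t m).1.1 (t m).1.2) ∧ Function.Bijective t

/-- The partial transformation table `φ` of Table 1. -/
def phiTable (a b : Fin 6) : Option (Fin 6) :=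
  if a = 0 ∨ a = 1 then
    if b = 0 then some 0 else if b = 1 then some 1 else if b = 2 then some 1
    else if b = 5 then some 0 else none
  else if a = 2 ∨ a = 3 then
    if b = 1 then some 2 else if b = 2 then some 2 else if b = 3 then some 3
    else if b = 4 then some 3 else none
  else
    if b = 0 then some 5 else if b = 3 then some 4 else if b = 4 then some 4
    else if b = 5 then some 5 else none

/-- The consecutive pairs of the supplemented word `0·w·0`. -/
def suppPairs (w : List (Fin 6)) : List (Fin 6 × Fin 6) :=
  ((0 : Fin 6) :: (w ++ [0])).zip (w ++ [0])

/-- `Φ(w)`: apply `φ` to the consecutive pairs of the supplemented word `0·w·0`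
(using the default value `0` where `φ` is undefined). -/
def PhiWord (w : List (Fin 6)) : List (Fin 6) :=
  (suppPairs w).map fun p => (phiTable p.1 p.2).getD 0

/-!
Identify the triangular lattice with `ℤ × ℤ` through `lat (x, y) = x·u(0) + y·u(1)`. An edge of
direction `o` is a side of the dark tile based at `p` exactly when it starts at `p + edgeStart o`,
where `edgeStart o` is one of the three vertices of the unit tile. The table `φ` is built so that
`edgeStart a = edgeStart (φ a b)` and `edgeStart o + u(o) = u(b) + edgeStart b` for `o = φ a b`:
while `w` walks from tile to tile, `Φ w` walks along one side of each tile it visits, its position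
always being that of `w` shifted by `edgeStart` of the current letter of `0·w·0`.

`φ a b` is undefined exactly on forbidden turns and on reversals `b = a + 3`, and an H-path has no
reversal, not even in `0·w·0`, because `P(-1,0)` and `P(n,0)` are not in the grid. Conversely,
consecutive edges of an S-path lie on different tiles, since the tile assignment is injective; for
such pairs of letters the middle letter `b` is recovered from `φ a b` and `φ b c` by the finite
table `phiInv`, which decodes S-paths into W-paths and inverts `Φ`.
-/

theorem segment_eq_segment_iff {𝕜 E : Type*} [Field 𝕜] [LinearOrder 𝕜] [IsStrictOrderedRing 𝕜]
    [AddCommGroup E] [Module 𝕜 E] {x y x' y' : E} (hxy : x ≠ y) :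
    segment 𝕜 x y = segment 𝕜 x' y' ↔ (x' = x ∧ y' = y) ∨ (x' = y ∧ y' = x) := by
  refine ⟨fun h => ?_, by rintro (⟨rfl, rfl⟩ | ⟨rfl, rfl⟩) <;> simp [segment_symm]⟩
  have hx' : x' ∈ AffineMap.lineMap x y '' Set.Icc (0 : 𝕜) 1 := by
    rw [← segment_eq_image_lineMap, h]; exact left_mem_segment 𝕜 x' y'
  have hy' : y' ∈ AffineMap.lineMap x y '' Set.Icc (0 : 𝕜) 1 := by
    rw [← segment_eq_image_lineMap, h]; exact right_mem_segment 𝕜 x' y'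
  obtain ⟨s, -, rfl⟩ := hx'
  obtain ⟨t, -, rfl⟩ := hy'
  rw [← image_segment, segment_eq_image_lineMap, segment_eq_uIcc] at h
  have hst := (AffineMap.lineMap_injective 𝕜 hxy).image_injective h
  rw [Set.uIcc, Set.Icc_eq_Icc_iff zero_le_one] at hst
  rcases le_total s t with hle | hle
  · left; simp_all
  · right; simp_all

theorem Function.injective_and_range_eq_iff {ι α β : Type*} {f : ι → α} {g : β → α}
    (hg : Function.Injective g) :
    (Function.Injective f ∧ Set.range f = Set.range g) ↔
      ∃ t : ι → β, Function.Bijective t ∧ f = g ∘ t := by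
  constructor
  · rintro ⟨hf, hrange⟩
    have hmem : ∀ i, f i ∈ Set.range g := fun i => hrange ▸ Set.mem_range_self i
    choose t ht using hmem
    have hft : f = g ∘ t := funext fun i => (ht i).symm
    refine ⟨t, ⟨fun i j hij => hf (by rw [hft, Function.comp_apply, hij]; rfl), fun b => ?_⟩, hft⟩
    obtain ⟨i, hi⟩ := hrange.symm ▸ Set.mem_range_self (f := g) b
    exact ⟨i, hg (by rw [← hi, hft]; rfl)⟩
  · rintro ⟨t, ht, rfl⟩
    exact ⟨hg.comp ht.1, ht.2.range_comp g⟩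

theorem List.getD_append_singleton_self {α : Type*} (l : List α) (d : α) (m : ℕ) :
    (l ++ [d]).getD m d = l.getD m d := by
  rcases lt_or_ge m l.length with h | h
  · exact List.getD_append _ _ _ _ h
  · rw [List.getD_append_right _ _ _ _ h, List.getD_eq_default l d h]
    cases m - l.length <;> simp

section Lattice

lemma dirU_eq_pow (d : Fin 6) : dirU d = dirU 1 ^ (d : ℕ) := by
  rw [dirU, dirU, ← Complex.exp_nat_mul]
  congr 1
  simp only [Fin.val_one, Nat.cast_one]
  ring

lemma dirU_one : dirU 1 = 1 / 2 + (Real.sqrt 3 / 2 : ℝ) * Complex.I := by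
  have h : ((1 : Fin 6) : ℕ) * Real.pi / 3 * Complex.I = ((Real.pi / 3 : ℝ) : ℂ) * Complex.I := by
    push_cast; simp
  rw [dirU, h, Complex.exp_mul_I, ← Complex.ofReal_cos, ← Complex.ofReal_sin,
    Real.cos_pi_div_three, Real.sin_pi_div_three]
  push_cast; ring

lemma dirU_one_sq : dirU 1 ^ 2 = dirU 1 - 1 := by
  have h3 : (Real.sqrt 3 : ℂ) ^ 2 = 3 := by
    rw [← Complex.ofReal_pow, Real.sq_sqrt (by norm_num)]; norm_num
  rw [dirU_one]
  push_cast
  linear_combination (Complex.I ^ 2 / 4) * h3 + (3 / 4 : ℂ) * Complex.I_sq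

noncomputable def lat : ℤ × ℤ →+ ℂ where
  toFun v := v.1 + v.2 * dirU 1
  map_zero' := by simp
  map_add' v w := by simp only [Prod.fst_add, Prod.snd_add]; push_cast; ring

lemma lat_apply (v : ℤ × ℤ) : lat v = v.1 + v.2 * dirU 1 := rfl

lemma lat_injective : Function.Injective lat := by
  refine (injective_iff_map_eq_zero lat).2 fun v hv => ?_
  have him : (v.2 : ℝ) * (Real.sqrt 3 / 2) = 0 := by
    simpa [lat_apply, dirU_one] using congrArg Complex.im hv
  have h2 : v.2 = 0 := by exact_mod_cast (mul_eq_zero.1 him).resolve_right (by positivity)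
  have hre : (v.1 : ℝ) + v.2 * 2⁻¹ = 0 := by
    simpa [lat_apply, dirU_one] using congrArg Complex.re hv
  rw [h2, Int.cast_zero, zero_mul, add_zero, Int.cast_eq_zero] at hre
  exact Prod.ext hre h2

def dirV : Fin 6 → ℤ × ℤ := ![(1, 0), (0, 1), (-1, 1), (-1, 0), (0, -1), (1, -1)]

lemma dirU_eq_lat (d : Fin 6) : dirU d = lat (dirV d) := by
  have h := dirU_one_sq
  rw [dirU_eq_pow, lat_apply]
  fin_cases d <;> simp only [Fin.isValue, Fin.zero_eta, Fin.mk_one, Fin.reduceFinMk, pow_zero,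
    pow_one, dirV, Int.reduceNeg, Matrix.cons_val_zero, Matrix.cons_val_one, Matrix.cons_val,
    Int.cast_one, Int.cast_zero, Int.cast_neg, zero_mul, add_zero, one_mul, zero_add, neg_mul]
  · linear_combination h
  · linear_combination (dirU 1 + 1) * h
  · linear_combination (dirU 1 ^ 2 + dirU 1) * h
  · linear_combination (dirU 1 ^ 3 + dirU 1 ^ 2 - 1) * h

lemma Pt_eq_lat (i j : ℕ) : Pt i j = lat (i, j) := by
  rw [Pt, dirU_eq_lat 0, lat_apply, lat_apply]; simp [dirV]

def posV (l : List (Fin 6)) (m : ℕ) : ℤ × ℤ := ((l.take m).map dirV).sum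

lemma posSeq_eq_lat (l : List (Fin 6)) (m : ℕ) : posSeq l m = lat (posV l m) := by
  simp only [posSeq, posV, map_list_sum, List.map_take, List.map_map]
  congr 3
  exact funext dirU_eq_lat

@[simp] lemma posV_zero (l : List (Fin 6)) : posV l 0 = 0 := by simp [posV]

lemma posV_succ {l : List (Fin 6)} {m : ℕ} (hm : m < l.length) :
    posV l (m + 1) = posV l m + dirV (l.getD m 0) := by
  rw [posV, posV, List.map_take, List.map_take, List.sum_take_succ _ _ (by simpa),
    List.getElem_map, List.getD_eq_getElem _ _ hm]

lemma posV_append {l : List (Fin 6)} (l' : List (Fin 6)) {m : ℕ} (hm : m ≤ l.length) :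
    posV (l ++ l') m = posV l m := by
  rw [posV, posV, List.take_append_of_le_length hm]

end Lattice

section Sides

def edgeStart : Fin 6 → ℤ × ℤ := ![(0, 0), (0, 0), (1, 0), (1, 0), (0, 1), (0, 1)]

def unitSides : List ((ℤ × ℤ) × (ℤ × ℤ)) :=
  [((0, 0), (1, 0)), ((1, 0), (0, 1)), ((0, 0), (0, 1))]

lemma edgeStart_mem_unitSides : ∀ o : Fin 6,
    (edgeStart o, edgeStart o + dirV o) ∈ unitSides ∨
      (edgeStart o + dirV o, edgeStart o) ∈ unitSides := by decide

lemma eq_edgeStart_of_mem_unitSides : ∀ o : Fin 6, ∀ p ∈ unitSides,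
    (p.2 - p.1 = dirV o → p.1 = edgeStart o) ∧ (p.1 - p.2 = dirV o → p.2 = edgeStart o) := by
  decide

lemma exists_dirV_of_mem_unitSides : ∀ p ∈ unitSides, ∃ o, p.2 = p.1 + dirV o := by decide

lemma dirV_ne_zero : ∀ o : Fin 6, dirV o ≠ 0 := by decide

lemma isSideOf_iff {e : Set ℂ} {i j : ℕ} : IsSideOf e i j ↔ ∃ p ∈ unitSides,
    e = segment ℝ (lat (((i : ℤ), (j : ℤ)) + p.1)) (lat (((i : ℤ), (j : ℤ)) + p.2)) := by
  simp [IsSideOf, unitSides, Pt_eq_lat, -map_add]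

lemma isSideOf_segment_iff {x : ℤ × ℤ} {o : Fin 6} {i j : ℕ} :
    IsSideOf (segment ℝ (lat x) (lat (x + dirV o))) i j ↔
      x = ((i : ℤ), (j : ℤ)) + edgeStart o := by
  constructor
  · rw [isSideOf_iff]
    rintro ⟨p, hp, he⟩
    have hne : lat x ≠ lat (x + dirV o) := by
      rw [Ne, lat_injective.eq_iff, left_eq_add]; exact dirV_ne_zero o
    have hstart := eq_edgeStart_of_mem_unitSides o p hp
    rcases (segment_eq_segment_iff hne).1 he with ⟨h1, h2⟩ | ⟨h1, h2⟩ <;>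
      rw [lat_injective.eq_iff] at h1 h2
    · rw [← h1, hstart.1 (by linear_combination h2 - h1)]
    · rw [← h2, hstart.2 (by linear_combination h1 - h2)]
  · rintro rfl
    rcases edgeStart_mem_unitSides o with h | h <;> refine isSideOf_iff.2 ⟨_, h, ?_⟩
    · simp [add_assoc]
    · simp [add_assoc, segment_symm]

lemma isSideOf_unique {e : Set ℂ} {i j i' j' : ℕ} (h : IsSideOf e i j) (h' : IsSideOf e i' j') :
    i = i' ∧ j = j' := by
  obtain ⟨p, hp, rfl⟩ := isSideOf_iff.1 h
  obtain ⟨o, ho⟩ := exists_dirV_of_mem_unitSides p hp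
  rw [ho, ← add_assoc] at h h'
  simpa using (isSideOf_segment_iff.1 h).symm.trans (isSideOf_segment_iff.1 h')

end Sides

section Tables

/-- An edge `o'` following an edge `o` does not start where `o` ends within the tile of `o`, i.e.
the two consecutive edges lie on different dark tiles. -/
def ChangesTile (o o' : Fin 6) : Prop := edgeStart o + dirV o ≠ edgeStart o'

instance : DecidableRel ChangesTile := fun _ _ => inferInstanceAs (Decidable (_ ≠ _))

def phiInv (o o' : Fin 6) : Fin 6 :=
  if o = 0 ∨ o = 5 then (if (o' : ℕ) ≤ 1 then 0 else 5)
  else if o = 1 ∨ o = 2 then (if (o' : ℕ) ≤ 1 then 1 else 2)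
  else (if (o' : ℕ) ≤ 3 then 3 else 4)

def IsTileVertex (v : ℤ × ℤ) : Prop := 0 ≤ v.1 ∧ 0 ≤ v.2 ∧ v.1 + v.2 ≤ 1

instance : DecidablePred IsTileVertex := fun _ => inferInstanceAs (Decidable (_ ∧ _))

lemma isTileVertex_edgeStart : ∀ o : Fin 6,
    IsTileVertex (edgeStart o) ∧ IsTileVertex (edgeStart o + dirV o) := by decide

lemma dirV_add_three : ∀ a : Fin 6, dirV (a + 3) = -dirV a := by decide

lemma phiTable_isSome_iff : ∀ a b : Fin 6,
    (phiTable a b).isSome ↔ ¬ ForbiddenTurn a b ∧ b ≠ a + 3 := by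
  unfold ForbiddenTurn; decide

lemma edgeStart_eq_of_phiTable : ∀ a b o : Fin 6,
    phiTable a b = some o → edgeStart a = edgeStart o := by decide

lemma edgeStart_add_dirV_of_phiTable : ∀ a b o : Fin 6,
    phiTable a b = some o → edgeStart o + dirV o = dirV b + edgeStart b := by decide

lemma phiInv_of_phiTable : ∀ a b c o o' : Fin 6,
    phiTable a b = some o → phiTable b c = some o' → phiInv o o' = b := by decide

lemma phiTable_zero_phiInv : ∀ o o' : Fin 6,
    ChangesTile o o' → edgeStart o = 0 → phiTable 0 (phiInv o o') = some o := by decide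

lemma phiTable_phiInv_phiInv : ∀ o o' o'' : Fin 6, ChangesTile o o' → ChangesTile o' o'' →
    phiTable (phiInv o o') (phiInv o' o'') = some o' := by decide

lemma phiTable_phiInv_zero : ∀ o o' : Fin 6, ChangesTile o o' →
    edgeStart o' + dirV o' = (1, 0) → phiTable (phiInv o o') 0 = some o' := by decide

end Tables

section Words

/-- The `m`-th letter of `0·w·0`; the final `0` is the default value of `getD`. -/
def suppLetter (w : List (Fin 6)) (m : ℕ) : Fin 6 := (0 :: w).getD m 0

@[simp] lemma suppLetter_zero (w : List (Fin 6)) : suppLetter w 0 = 0 := rfl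

@[simp] lemma suppLetter_succ (w : List (Fin 6)) (m : ℕ) :
    suppLetter w (m + 1) = w.getD m 0 := rfl

lemma getElem_zero_cons_append_zero {w : List (Fin 6)} {m : ℕ} (h : m < (0 :: (w ++ [0])).length) :
    (0 :: (w ++ [0]))[m] = suppLetter w m := by
  rw [← List.getD_eq_getElem _ 0 h, ← List.cons_append, List.getD_append_singleton_self]; rfl

lemma getElem_append_zero {w : List (Fin 6)} {m : ℕ} (h : m < (w ++ [0]).length) :
    (w ++ [0])[m] = suppLetter w (m + 1) := by
  rw [← List.getD_eq_getElem _ 0 h, List.getD_append_singleton_self]; rfl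

lemma suppPairs_eq_ofFn (w : List (Fin 6)) : suppPairs w =
    List.ofFn fun m : Fin (w.length + 1) => (suppLetter w m, suppLetter w (m + 1)) := by
  refine List.ext_getElem (by simp [suppPairs]) fun m _ _ => ?_
  simp only [suppPairs, List.getElem_zip, getElem_zero_cons_append_zero, getElem_append_zero,
    List.getElem_ofFn]

lemma phiWord_eq_ofFn (w : List (Fin 6)) : PhiWord w = List.ofFn fun m : Fin (w.length + 1) =>
    (phiTable (suppLetter w m) (suppLetter w (m + 1))).getD 0 := by
  rw [PhiWord, suppPairs_eq_ofFn, List.map_ofFn]; rfl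

@[simp] lemma length_phiWord (w : List (Fin 6)) : (PhiWord w).length = w.length + 1 := by
  simp [phiWord_eq_ofFn]

lemma getD_phiWord {w : List (Fin 6)} {m : ℕ} (hm : m ≤ w.length) :
    (PhiWord w).getD m 0 = (phiTable (suppLetter w m) (suppLetter w (m + 1))).getD 0 := by
  simp only [phiWord_eq_ofFn]
  rw [List.getD_eq_getElem _ _ (by simpa [Nat.lt_succ_iff] using hm), List.getElem_ofFn]

lemma isChain_supp_iff {R : Fin 6 → Fin 6 → Prop} {w : List (Fin 6)} :
    List.IsChain R (0 :: (w ++ [0])) ↔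
      ∀ m ≤ w.length, R (suppLetter w m) (suppLetter w (m + 1)) := by
  simp only [List.isChain_iff_getElem, getElem_zero_cons_append_zero, List.length_cons,
    List.length_append, List.length_nil, zero_add, Nat.lt_succ_iff, Nat.add_le_add_iff_right]

def PhiDefined (w : List (Fin 6)) : Prop :=
  ∀ m ≤ w.length, (phiTable (suppLetter w m) (suppLetter w (m + 1))).isSome

lemma PhiDefined.phiTable_eq {w : List (Fin 6)} (h : PhiDefined w) {m : ℕ} (hm : m ≤ w.length) :
    phiTable (suppLetter w m) (suppLetter w (m + 1)) = some ((PhiWord w).getD m 0) := by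
  obtain ⟨o, ho⟩ := Option.isSome_iff_exists.1 (h m hm)
  rw [getD_phiWord hm, ho]
  rfl

lemma PhiDefined.posV_phiWord {w : List (Fin 6)} (h : PhiDefined w) :
    ∀ m ≤ w.length + 1, posV (PhiWord w) m = posV (w ++ [0]) m + edgeStart (suppLetter w m)
  | 0, _ => by simp [edgeStart, Prod.mk_zero_zero]
  | m + 1, hm => by
    have hφ := h.phiTable_eq (m := m) (by omega)
    rw [posV_succ (by rw [length_phiWord]; omega), h.posV_phiWord m (by omega),
      posV_succ (by rw [List.length_append, List.length_singleton]; omega),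
      List.getD_append_singleton_self, edgeStart_eq_of_phiTable _ _ _ hφ, add_assoc,
      edgeStart_add_dirV_of_phiTable _ _ _ hφ, add_assoc]
    rfl

lemma PhiDefined.posV_phiWord_of_le {w : List (Fin 6)} (h : PhiDefined w) {m : ℕ}
    (hm : m ≤ w.length) :
    posV (PhiWord w) m = posV w m + edgeStart ((PhiWord w).getD m 0) := by
  rw [h.posV_phiWord m (by omega), posV_append _ hm,
    edgeStart_eq_of_phiTable _ _ _ (h.phiTable_eq hm)]

lemma PhiDefined.posV_phiWord_length {w : List (Fin 6)} (h : PhiDefined w) :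
    posV (PhiWord w) (w.length + 1) = posV w w.length + (1, 0) := by
  rw [h.posV_phiWord _ le_rfl, posV_succ (by simp), posV_append _ le_rfl, suppLetter_succ,
    List.getD_append_singleton_self, List.getD_eq_default _ _ le_rfl]
  simp [dirV, edgeStart]

def decode (s : List (Fin 6)) : List (Fin 6) := List.zipWith phiInv s s.tail

@[simp] lemma length_decode (s : List (Fin 6)) : (decode s).length = s.length - 1 := by
  simp [decode]

lemma getD_decode {s : List (Fin 6)} {k : ℕ} (hk : k + 1 < s.length) :
    (decode s).getD k 0 = phiInv (s.getD k 0) (s.getD (k + 1) 0) := by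
  rw [List.getD_eq_getElem _ _ (by rw [length_decode]; omega), List.getD_eq_getElem _ _ (by omega),
    List.getD_eq_getElem _ _ hk]
  simp [decode]

lemma PhiDefined.decode_phiWord {w : List (Fin 6)} (h : PhiDefined w) :
    decode (PhiWord w) = w := by
  refine List.ext_getElem (by simp) fun k hk hk' => ?_
  have := getD_decode (s := PhiWord w) (k := k) (by rw [length_phiWord]; omega)
  rw [List.getD_eq_getElem _ _ hk] at this
  rw [this, ← List.getD_eq_getElem w 0 hk']
  exact phiInv_of_phiTable _ _ _ _ _ (h.phiTable_eq (m := k) (by omega))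
    (h.phiTable_eq (m := k + 1) (by omega))

lemma phiDefined_and_phiWord_eq {w s : List (Fin 6)} (hlen : s.length = w.length + 1)
    (h : ∀ m < s.length, phiTable (suppLetter w m) (suppLetter w (m + 1)) = some (s.getD m 0)) :
    PhiDefined w ∧ PhiWord w = s := by
  refine ⟨fun m hm => by rw [h m (by omega)]; rfl, List.ext_getElem (by simp [hlen]) ?_⟩
  intro m hm hm'
  rw [← List.getD_eq_getElem _ 0 hm, ← List.getD_eq_getElem _ 0 hm',
    getD_phiWord (by rw [length_phiWord] at hm; omega), h m hm']
  rfl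

lemma phiTable_suppLetter_decode {s : List (Fin 6)} (hs : 2 ≤ s.length)
    (hchange : ∀ m, m + 1 < s.length → ChangesTile (s.getD m 0) (s.getD (m + 1) 0))
    (hfirst : edgeStart (s.getD 0 0) = 0)
    (hlast : edgeStart (s.getD (s.length - 1) 0) + dirV (s.getD (s.length - 1) 0) = (1, 0)) :
    ∀ m < s.length,
      phiTable (suppLetter (decode s) m) (suppLetter (decode s) (m + 1)) = some (s.getD m 0) := by
  rintro (_ | m) hm
  · rw [suppLetter_zero, suppLetter_succ, getD_decode (by omega)]
    exact phiTable_zero_phiInv _ _ (hchange 0 (by omega)) hfirst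
  rw [suppLetter_succ, suppLetter_succ, getD_decode (k := m) (by omega)]
  rcases (by omega : m + 2 < s.length ∨ m + 2 = s.length) with hlt | heq
  · rw [getD_decode hlt]
    exact phiTable_phiInv_phiInv _ _ _ (hchange m (by omega)) (hchange (m + 1) hlt)
  · rw [List.getD_eq_default (decode s) 0 (by rw [length_decode]; omega)]
    rw [show s.length - 1 = m + 1 by omega] at hlast
    exact phiTable_phiInv_zero _ _ (hchange m (by omega)) hlast

end Words

section Paths

abbrev Tile (n : ℕ) := {p : ℕ × ℕ // p.1 + p.2 ≤ n - 1}

def Tile.coord {n : ℕ} (p : Tile n) : ℤ × ℤ := ((p.1.1 : ℤ), (p.1.2 : ℤ))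

lemma Tile.coord_injective {n : ℕ} : Function.Injective (Tile.coord (n := n)) := by
  intro p q h
  simp only [Tile.coord, Prod.mk.injEq, Nat.cast_inj] at h
  exact Subtype.ext (Prod.ext h.1 h.2)

lemma inscribedGrid_eq_range (n : ℕ) :
    inscribedGrid n = Set.range (lat ∘ Tile.coord (n := n)) := by
  ext z
  simp [inscribedGrid, Tile.coord, Pt_eq_lat, eq_comm]

lemma injective_and_range_eq_inscribedGrid_iff {n k : ℕ} {f : Fin k → ℤ × ℤ} :
    (Function.Injective (lat ∘ f) ∧ Set.range (lat ∘ f) = inscribedGrid n) ↔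
      ∃ t : Fin k → Tile n, Function.Bijective t ∧ ∀ m, f m = (t m).coord := by
  rw [inscribedGrid_eq_range, Function.injective_and_range_eq_iff
    (lat_injective.comp Tile.coord_injective)]
  simp only [funext_iff, Function.comp_apply, lat_injective.eq_iff]

lemma three_le_triNum {n : ℕ} (hn : 2 ≤ n) : 3 ≤ triNum n := by
  rw [triNum, Nat.le_div_iff_mul_le two_pos]
  nlinarith

lemma isHPath_iff {n : ℕ} {w : List (Fin 6)} : IsHPath n w ↔ w.length = triNum n - 1 ∧
    (∃ t : Fin (w.length + 1) → Tile n, Function.Bijective t ∧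
      ∀ m : Fin (w.length + 1), posV w m = (t m).coord) ∧
    posV w w.length = (((n - 1 : ℕ) : ℤ), 0) := by
  have hfun : (fun m : Fin (w.length + 1) => posSeq w m) =
      lat ∘ fun m : Fin (w.length + 1) => posV w m :=
    funext fun m => posSeq_eq_lat w m
  have hstart : posSeq w 0 = Pt 0 0 := by simp [posSeq_eq_lat, Pt_eq_lat, Prod.mk_zero_zero]
  rw [IsHPath, hfun, hstart, ← and_assoc (a := Function.Injective _),
    injective_and_range_eq_inscribedGrid_iff, posSeq_eq_lat, Pt_eq_lat (n - 1),
    lat_injective.eq_iff]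
  simp

lemma edgeSeg_eq {s : List (Fin 6)} {m : ℕ} (hm : m < s.length) :
    edgeSeg s m = segment ℝ (lat (posV s m)) (lat (posV s m + dirV (s.getD m 0))) := by
  rw [edgeSeg, posSeq_eq_lat, posSeq_eq_lat, posV_succ hm]

lemma isSPath_iff {n : ℕ} {s : List (Fin 6)} : IsSPath n s ↔ s.length = triNum n ∧
    posV s s.length = ((n : ℤ), 0) ∧ ∃ t : Fin s.length → Tile n, Function.Bijective t ∧
      ∀ m : Fin s.length, posV s m = (t m).coord + edgeStart (s.getD m 0) := by
  have hside (m : Fin s.length) (p : Tile n) :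
      IsSideOf (edgeSeg s m) p.1.1 p.1.2 ↔ posV s m = p.coord + edgeStart (s.getD m 0) := by
    rw [edgeSeg_eq m.2, isSideOf_segment_iff]; rfl
  have hend : (n : ℂ) * dirU 0 = lat ((n : ℤ), 0) := by simpa [Pt] using Pt_eq_lat n 0
  simp only [IsSPath, hside, posSeq_eq_lat, hend, lat_injective.eq_iff, posV_zero, map_zero,
    true_and]
  constructor
  · rintro ⟨hlen, hlast, -, t, hpos, ht⟩
    exact ⟨hlen, hlast, t, ht, hpos⟩
  · rintro ⟨hlen, hlast, t, ht, hpos⟩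
    refine ⟨hlen, hlast, fun m m' he => ht.1 ?_, t, hpos, ht⟩
    have hm := (hside m (t m)).2 (hpos m)
    have hm' := (hside m' (t m')).2 (hpos m')
    rw [he] at hm
    have := isSideOf_unique hm hm'
    exact Subtype.ext (Prod.ext this.1 this.2)

lemma IsHPath.suppLetter_succ_ne {n : ℕ} {w : List (Fin 6)} (hn : 2 ≤ n) (hw : IsHPath n w) :
    ∀ m ≤ w.length, suppLetter w (m + 1) ≠ suppLetter w m + 3 := by
  obtain ⟨hlen, ⟨t, ht, hpos⟩, hend⟩ := isHPath_iff.1 hw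
  have hL := three_le_triNum hn
  have hpos' (m : ℕ) (hm : m ≤ w.length) : posV w m = (t ⟨m, by omega⟩).coord :=
    hpos ⟨m, by omega⟩
  intro m hm hrev
  rcases m with _ | m
  · -- a first step in direction `3` would leave the grid at `P(-1,0)`
    have h1 := hpos' 1 (by omega)
    rw [posV_succ (by omega), posV_zero, zero_add, ← suppLetter_succ, hrev] at h1
    simp [dirV, Tile.coord, Prod.ext_iff] at h1
  rcases (by omega : m + 1 < w.length ∨ m + 1 = w.length) with hlt | heq
  · have h2 := hpos' (m + 2) (by omega)
    rw [posV_succ (by omega), posV_succ (by omega), ← suppLetter_succ, ← suppLetter_succ, hrev,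
      dirV_add_three, add_neg_cancel_right, hpos' m (by omega)] at h2
    have := ht.1 (Tile.coord_injective h2)
    simp [Fin.ext_iff] at this
  · -- a last step in direction `3` would come from `P(n,0)`, outside the grid
    rw [suppLetter_succ, suppLetter_succ, List.getD_eq_default _ _ heq.ge] at hrev
    have h3 : w.getD m 0 = 3 := by omega
    rw [← heq, posV_succ (by omega), h3, hpos' m (by omega)] at hend
    have := (t ⟨m, by omega⟩).2
    simp only [Tile.coord, dirV, Int.reduceNeg, Fin.isValue, Matrix.cons_val, Prod.mk_add_mk,
      add_zero, Prod.ext_iff, Int.natCast_eq_zero] at hend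
    omega

lemma IsWPath.phiDefined {n : ℕ} {w : List (Fin 6)} (hn : 2 ≤ n) (hw : IsWPath n w) :
    PhiDefined w := fun m hm =>
  (phiTable_isSome_iff _ _).2 ⟨isChain_supp_iff.1 hw.2 m hm, hw.1.suppLetter_succ_ne hn m hm⟩

lemma IsWPath.isSPath_phiWord {n : ℕ} {w : List (Fin 6)} (hn : 2 ≤ n) (hw : IsWPath n w) :
    IsSPath n (PhiWord w) := by
  have hφ := hw.phiDefined hn
  obtain ⟨hlen, ⟨t, ht, hpos⟩, hend⟩ := isHPath_iff.1 hw.1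
  have hL := three_le_triNum hn
  rw [isSPath_iff, length_phiWord]
  refine ⟨by omega, ?_, t, ht, fun m => ?_⟩
  · rw [hφ.posV_phiWord_length, hend, Prod.mk_add_mk, add_zero]
    congr 1
    omega
  · rw [hφ.posV_phiWord_of_le (by omega), hpos]

lemma IsSPath.phiTable_decode {n : ℕ} {s : List (Fin 6)} (hn : 2 ≤ n) (hs : IsSPath n s) :
    ∀ m < s.length,
      phiTable (suppLetter (decode s) m) (suppLetter (decode s) (m + 1)) = some (s.getD m 0) := by
  obtain ⟨hlen, hend, t, ht, hpos⟩ := isSPath_iff.1 hs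
  have hL := three_le_triNum hn
  have hpos' (m : ℕ) (hm : m < s.length) :
      posV s m = (t ⟨m, hm⟩).coord + edgeStart (s.getD m 0) := hpos ⟨m, hm⟩
  refine phiTable_suppLetter_decode (by omega) (fun m hm hsame => ?_) ?_ ?_
  · -- otherwise the edges `m` and `m + 1` would be sides of the same tile
    have h := posV_succ (l := s) (m := m) (by omega)
    rw [hpos' (m + 1) hm, hpos' m (by omega), add_assoc, hsame, add_left_inj] at h
    have := ht.1 (Tile.coord_injective h)
    simp [Fin.ext_iff] at this
  · have h := hpos' 0 (by omega)
    have hv := (isTileVertex_edgeStart (s.getD 0 0)).1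
    simp only [posV_zero, IsTileVertex, Tile.coord, Prod.ext_iff, Prod.fst_add, Prod.snd_add,
      Prod.fst_zero, Prod.snd_zero] at h hv ⊢
    omega
  · have h := posV_succ (l := s) (m := s.length - 1) (by omega)
    rw [Nat.sub_add_cancel (by omega), hend, hpos' _ (by omega), add_assoc] at h
    have hv := (isTileVertex_edgeStart (s.getD (s.length - 1) 0)).2
    have ht' := (t ⟨s.length - 1, by omega⟩).2
    simp only [IsTileVertex, Tile.coord, Prod.ext_iff, Prod.fst_add, Prod.snd_add] at h hv ⊢
    omega

lemma IsSPath.phiWord_decode {n : ℕ} {s : List (Fin 6)} (hn : 2 ≤ n) (hs : IsSPath n s) :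
    PhiDefined (decode s) ∧ PhiWord (decode s) = s := by
  have hL := three_le_triNum hn
  refine phiDefined_and_phiWord_eq ?_ (hs.phiTable_decode hn)
  rw [length_decode, hs.1]
  omega

lemma IsSPath.isWPath_decode {n : ℕ} {s : List (Fin 6)} (hn : 2 ≤ n) (hs : IsSPath n s) :
    IsWPath n (decode s) := by
  obtain ⟨hφ, hΦ⟩ := hs.phiWord_decode hn
  obtain ⟨hlen, hend, t, ht, hpos⟩ := isSPath_iff.1 hs
  have hL := three_le_triNum hn
  have hwlen : (decode s).length + 1 = s.length := by rw [length_decode]; omega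
  refine ⟨isHPath_iff.2 ⟨by omega, ⟨t ∘ Fin.cast hwlen, ht.comp (finCongr hwlen).bijective,
    fun m => ?_⟩, ?_⟩, isChain_supp_iff.2 fun m hm => ((phiTable_isSome_iff _ _).1 (hφ m hm)).1⟩
  · have h := hφ.posV_phiWord_of_le (m := m) (by omega)
    rw [hΦ, show posV s m = (t (Fin.cast hwlen m)).coord + edgeStart (s.getD m 0) from
      hpos (Fin.cast hwlen m), add_left_inj] at h
    exact h.symm
  · have h := hφ.posV_phiWord_length
    rw [hΦ, hwlen, hend] at h
    ext <;> simp [Prod.ext_iff] at h ⊢ <;> omega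

end Paths

/-- For every `n ≥ 2`, `φ` is defined on every consecutive pair of
the supplemented word of every W-path of order `n`, and `Φ` is a bijection from the
set of W-paths of order `n` onto the set of S-paths of order `n`. -/
theorem phi_defined_and_bijective (n : ℕ) (hn : 2 ≤ n) :
    (∀ w, IsWPath n w → ∀ p ∈ suppPairs w, (phiTable p.1 p.2).isSome) ∧
    Set.BijOn PhiWord {w | IsWPath n w} {s | IsSPath n s} := by
  refine ⟨fun w hw p hp => ?_, Set.InvOn.bijOn ⟨fun w hw => (hw.phiDefined hn).decode_phiWord,
    fun s hs => (hs.phiWord_decode hn).2⟩ (fun w hw => hw.isSPath_phiWord hn)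
    (fun s hs => hs.isWPath_decode hn)⟩
  rw [suppPairs_eq_ofFn, List.mem_ofFn] at hp
  obtain ⟨m, rfl⟩ := hp
  exact hw.phiDefined hn m (Nat.lt_succ_iff.1 m.2)
end

section
/- For every n ≥ 2, the map sending an S-path of order n to the Hamiltonian path obtained by connecting the centroids of its consecutively touched dark tiles is injective; consequently the number of S-paths of order n is at most the number of H-paths of order n (|H_n| ≥ |S_n|). -/
/-- The centroid of the dark tile `Δ(i,j)`. -/
noncomputable def centroidUp (i j : ℕ) : ℂ := Pt i j + (dirU 0 + dirU 1) / 3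

/-- `w` is the direction word obtained from the S-path `s` by connecting the centroids of
its consecutively touched dark tiles. -/
def DerivedWord (n : ℕ) (s w : List (Fin 6)) : Prop :=
  ∃ t : ℕ → ℕ × ℕ,
    (∀ m < s.length, (t m).1 + (t m).2 ≤ n - 1 ∧
      IsSideOf (edgeSeg s m) (t m).1 (t m).2) ∧
    w.length = s.length - 1 ∧
    ∀ m < s.length - 1,
      centroidUp (t (m + 1)).1 (t (m + 1)).2
        = centroidUp (t m).1 (t m).2 + dirU (w.getD m 0)




namespace SAux2

lemma seg_cases {a b c d : ℂ} (h : segment ℝ a b = segment ℝ c d) :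
    (a = c ∧ b = d) ∨ (a = d ∧ b = c) := by
  by_cases hab : a = b
  · subst hab
    have hc : c ∈ segment ℝ a a := h ▸ left_mem_segment ℝ c d
    have hd : d ∈ segment ℝ a a := h ▸ right_mem_segment ℝ c d
    rw [segment_same] at hc hd
    exact Or.inl ⟨hc.symm, hd.symm⟩
  · have hc : c ∈ segment ℝ a b := h ▸ left_mem_segment ℝ c d
    have hd : d ∈ segment ℝ a b := h ▸ right_mem_segment ℝ c d
    have ha : a ∈ segment ℝ c d := h ▸ left_mem_segment ℝ a b
    have hb : b ∈ segment ℝ c d := h ▸ right_mem_segment ℝ a b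
    obtain ⟨u, v, hu, hv, huv, hc'⟩ := hc
    obtain ⟨p, q, hp, hq, hpq, hd'⟩ := hd
    obtain ⟨x, y, hx, hy, hxy, ha'⟩ := ha
    obtain ⟨z, w, hz, hw, hzw, hb'⟩ := hb
    rw [← hc', ← hd'] at ha' hb'
    have key : ∀ r : ℝ, r • a + (1 - r) • b = a → (1 - r) = 0 := by
      intro r hr
      by_contra h0
      exact hab (smul_right_injective ℂ h0
        (by linear_combination (norm := module) hr) : b = a).symm
    have keyb : ∀ r : ℝ, r • a + (1 - r) • b = b → r = 0 := by
      intro r hr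
      by_contra h0
      exact hab (smul_right_injective ℂ h0
        (by linear_combination (norm := module) hr) : a = b)
    have haa : (x*u+y*p) • a + (x*v+y*q) • b = a := by
      linear_combination (norm := module) ha'
    have hbb : (z*u+w*p) • a + (z*v+w*q) • b = b := by
      linear_combination (norm := module) hb'
    have hsum : x*u+y*p + (x*v+y*q) = 1 := by linear_combination x*huv + y*hpq + hxy
    have hsum2 : z*u+w*p + (z*v+w*q) = 1 := by linear_combination z*huv + w*hpq + hzw
    have hβ : x*v+y*q = 0 := by
      have := key (x*u+y*p) (by rw [show 1 - (x*u+y*p) = x*v+y*q by linarith]; exact haa)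
      linarith
    have hα : z*u+w*p = 0 :=
      keyb _ (by rw [show 1 - (z*u+w*p) = z*v+w*q by linarith]; exact hbb)
    have hxv : x*v = 0 ∧ y*q = 0 := by
      have h1 := mul_nonneg hx hv; have h2 := mul_nonneg hy hq
      constructor <;> linarith
    have hzu : z*u = 0 ∧ w*p = 0 := by
      have h1 := mul_nonneg hz hu; have h2 := mul_nonneg hw hp
      constructor <;> linarith
    by_cases hx0 : x = 0
    · right
      have hy1 : y = 1 := by linarith
      have had : a = d := by rw [← ha', ← hd', hx0, hy1]; simp
      refine ⟨had, ?_⟩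
      by_cases hp0 : p = 0
      · exfalso
        have hq1 : q = 1 := by linarith
        have hdb : d = b := by rw [← hd', hp0, hq1]; simp
        exact hab (had.trans hdb)
      · have hw0 : w = 0 := by
          rcases mul_eq_zero.1 hzu.2 with h' | h'
          · exact h'
          · exact absurd h' hp0
        have hz1 : z = 1 := by linarith
        rw [← hb', ← hc', hw0, hz1]; simp
    · left
      have hv0 : v = 0 := by
        rcases mul_eq_zero.1 hxv.1 with h' | h'
        · exact absurd h' hx0
        · exact h'
      have hu1 : u = 1 := by linarith
      have hca : c = a := by rw [← hc', hv0, hu1]; simp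
      refine ⟨hca.symm, ?_⟩
      have hz0 : z = 0 := by
        rcases mul_eq_zero.1 hzu.1 with h' | h'
        · exact h'
        · linarith
      have hw1 : w = 1 := by linarith
      rw [← hb', ← hd', hz0, hw1]; simp

end SAux2

namespace SAux

noncomputable def ζ : ℂ := dirU 1

lemma zeta_eq : ζ = Complex.exp ((Real.pi/3 : ℝ) * Complex.I) := by
  unfold ζ dirU
  congr 1
  push_cast [Fin.val_one]
  ring

lemma dirU_pow (d : Fin 6) : dirU d = ζ ^ (d : ℕ) := by
  rw [zeta_eq]
  unfold dirU
  rw [← Complex.exp_nat_mul]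
  congr 1
  push_cast
  ring

lemma zeta_re : ζ.re = 1/2 := by
  rw [zeta_eq, Complex.exp_ofReal_mul_I_re, Real.cos_pi_div_three]

lemma zeta_im : ζ.im = Real.sqrt 3 / 2 := by
  rw [zeta_eq, Complex.exp_ofReal_mul_I_im, Real.sin_pi_div_three]

lemma zeta_sq : ζ ^ 2 = ζ - 1 := by
  have h3 : Real.sqrt 3 * Real.sqrt 3 = 3 := Real.mul_self_sqrt (by norm_num)
  apply Complex.ext <;>
    simp [pow_two, Complex.mul_re, Complex.mul_im, zeta_re, zeta_im, Complex.sub_re,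
      Complex.sub_im, Complex.one_re, Complex.one_im] <;> nlinarith [h3]

lemma coeff_inj {a b c d : ℤ} (h : (a:ℂ) + b * ζ = c + d * ζ) : a = c ∧ b = d := by
  have him := congrArg Complex.im h
  have hre := congrArg Complex.re h
  simp [Complex.add_im, Complex.add_re, Complex.mul_im, Complex.mul_re, zeta_im, zeta_re]
    at him hre
  have h30 : (0:ℝ) < Real.sqrt 3 := Real.sqrt_pos.2 (by norm_num)
  have hbd : (b:ℝ) = d := by
    rcases mul_eq_zero.1 (show ((b:ℝ) - d) * (Real.sqrt 3 / 2) = 0 by first | linarith | (push_cast [him]; ring)) with h' | h'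
    · linarith
    · linarith
  have hb : b = d := by exact_mod_cast hbd
  subst hb
  refine ⟨?_, rfl⟩
  have : (a:ℝ) = c := by linarith
  exact_mod_cast this

lemma Pt_eq (i j : ℕ) : Pt i j = (i:ℂ) + (j:ℂ) * ζ := by
  unfold Pt
  rw [dirU_pow 0, dirU_pow 1]
  norm_num

lemma Pt_inj {a b c d : ℕ} (h : Pt a b = Pt c d) : a = c ∧ b = d := by
  rw [Pt_eq, Pt_eq] at h
  have h2 : ((a:ℤ):ℂ) + ((b:ℤ):ℂ) * ζ = ((c:ℤ):ℂ) + ((d:ℤ):ℂ) * ζ := by push_cast; push_cast at h; exact h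
  have := coeff_inj h2
  omega

def Co : Fin 6 → ℤ × ℤ
  | 0 => (1,0)
  | 1 => (0,1)
  | 2 => (-1,1)
  | 3 => (-1,0)
  | 4 => (0,-1)
  | 5 => (1,-1)

lemma dirU_coeff (d : Fin 6) : dirU d = ((Co d).1 : ℂ) + ((Co d).2 : ℂ) * ζ := by
  fin_cases d <;> rw [dirU_pow] <;> show _ = _ <;> push_cast [Co]
  · norm_num
  · ring
  · linear_combination zeta_sq
  · linear_combination (ζ + 1) * zeta_sq
  · linear_combination (ζ ^ 2 + ζ) * zeta_sq
  · linear_combination (ζ ^ 3 + ζ ^ 2 - 1) * zeta_sq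

lemma dirU_inj {d d' : Fin 6} (h : dirU d = dirU d') : d = d' := by
  rw [dirU_coeff, dirU_coeff] at h
  have := coeff_inj h
  fin_cases d <;> fin_cases d' <;> simp_all [Co] <;> omega

end SAux

namespace SAux

def VtxC (i j a b : ℕ) : Prop :=
  (a = i ∧ b = j) ∨ (a = i + 1 ∧ b = j) ∨ (a = i ∧ b = j + 1)

lemma posSeq_zero (s : List (Fin 6)) : posSeq s 0 = 0 := by simp [posSeq]

lemma posSeq_succ {s : List (Fin 6)} {m : ℕ} (h : m < s.length) :
    posSeq s (m + 1) = posSeq s m + dirU (s.getD m 0) := by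
  unfold posSeq
  rw [List.take_succ]
  have hg : s[m]? = some (s.getD m 0) := by
    rw [List.getD_eq_getElem _ _ h, List.getElem?_eq_getElem h]
  rw [hg]
  simp

lemma Pt_zero : Pt 0 0 = 0 := by simp [Pt_eq]

lemma Pt_n (n : ℕ) : Pt n 0 = (n : ℂ) * dirU 0 := by simp [Pt]

lemma side_endpoints {s : List (Fin 6)} {m i j : ℕ} (h : IsSideOf (edgeSeg s m) i j) :
    ∃ a b c d : ℕ, posSeq s m = Pt a b ∧ posSeq s (m + 1) = Pt c d ∧
      VtxC i j a b ∧ VtxC i j c d ∧ ¬(a = c ∧ b = d) := by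
  rcases h with h | h | h <;> rcases SAux2.seg_cases h with ⟨h1, h2⟩ | ⟨h1, h2⟩
  · exact ⟨i, j, i+1, j, h1, h2, by unfold VtxC; omega, by unfold VtxC; omega, by omega⟩
  · exact ⟨i+1, j, i, j, h1, h2, by unfold VtxC; omega, by unfold VtxC; omega, by omega⟩
  · exact ⟨i+1, j, i, j+1, h1, h2, by unfold VtxC; omega, by unfold VtxC; omega, by omega⟩
  · exact ⟨i, j+1, i+1, j, h1, h2, by unfold VtxC; omega, by unfold VtxC; omega, by omega⟩
  · exact ⟨i, j, i, j+1, h1, h2, by unfold VtxC; omega, by unfold VtxC; omega, by omega⟩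
  · exact ⟨i, j+1, i, j, h1, h2, by unfold VtxC; omega, by unfold VtxC; omega, by omega⟩

lemma tiles_of_shared {i j i' j' a b c d : ℕ} (h1 : VtxC i j a b) (h2 : VtxC i j c d)
    (h3 : VtxC i' j' a b) (h4 : VtxC i' j' c d) (hne : ¬(a = c ∧ b = d)) :
    i = i' ∧ j = j' := by unfold VtxC at *; omega

lemma shared_unique {i j i' j' a b c d : ℕ} (h1 : VtxC i j a b) (h2 : VtxC i' j' a b)
    (h3 : VtxC i j c d) (h4 : VtxC i' j' c d) (hne : ¬(i = i' ∧ j = j')) :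
    a = c ∧ b = d := by unfold VtxC at *; omega

lemma adj_of_shared {i j i' j' a b : ℕ} (h1 : VtxC i j a b) (h2 : VtxC i' j' a b)
    (hne : ¬(i = i' ∧ j = j')) :
    (i' = i+1 ∧ j' = j) ∨ (i = i'+1 ∧ j' = j) ∨ (i' = i ∧ j' = j+1) ∨
    (i' = i ∧ j = j'+1) ∨ (i = i'+1 ∧ j' = j+1) ∨ (i' = i+1 ∧ j = j'+1) := by
  unfold VtxC at *; omega

lemma sideOf_unique {s : List (Fin 6)} {m i j i' j' : ℕ}
    (h : IsSideOf (edgeSeg s m) i j) (h' : IsSideOf (edgeSeg s m) i' j') :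
    i = i' ∧ j = j' := by
  obtain ⟨a, b, c, d, h1, h2, v1, v2, hne⟩ := side_endpoints h
  obtain ⟨a', b', c', d', h1', h2', v1', v2', hne'⟩ := side_endpoints h'
  obtain ⟨ea, eb⟩ := Pt_inj (h1.symm.trans h1')
  obtain ⟨ec, ed⟩ := Pt_inj (h2.symm.trans h2')
  subst ea; subst eb; subst ec; subst ed
  exact tiles_of_shared v1 v2 v1' v2' hne

lemma centroid_shift {i j i' j' : ℕ} {z : ℂ} :
    centroidUp i j = centroidUp i' j' + z ↔ Pt i j = Pt i' j' + z := by
  unfold centroidUp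
  constructor <;> intro h <;> linear_combination h

lemma centroid_inj {i j i' j' : ℕ} (h : centroidUp i j = centroidUp i' j') :
    i = i' ∧ j = j' := by
  apply Pt_inj
  unfold centroidUp at h
  linear_combination h

lemma move_dir {i j i' j' : ℕ}
    (h : (i' = i+1 ∧ j' = j) ∨ (i = i'+1 ∧ j' = j) ∨ (i' = i ∧ j' = j+1) ∨
      (i' = i ∧ j = j'+1) ∨ (i = i'+1 ∧ j' = j+1) ∨ (i' = i+1 ∧ j = j'+1)) :
    ∃ d : Fin 6, Pt i' j' = Pt i j + dirU d := by
  rcases h with ⟨h1, h2⟩ | ⟨h1, h2⟩ | ⟨h1, h2⟩ | ⟨h1, h2⟩ | ⟨h1, h2⟩ | ⟨h1, h2⟩ <;>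
    subst h1 <;> subst h2
  · exact ⟨0, by rw [Pt_eq, Pt_eq, dirU_coeff]; push_cast [Co]; ring⟩
  · exact ⟨3, by rw [Pt_eq, Pt_eq, dirU_coeff]; push_cast [Co]; ring⟩
  · exact ⟨1, by rw [Pt_eq, Pt_eq, dirU_coeff]; push_cast [Co]; ring⟩
  · exact ⟨4, by rw [Pt_eq, Pt_eq, dirU_coeff]; push_cast [Co]; ring⟩
  · exact ⟨2, by rw [Pt_eq, Pt_eq, dirU_coeff]; push_cast [Co]; ring⟩
  · exact ⟨5, by rw [Pt_eq, Pt_eq, dirU_coeff]; push_cast [Co]; ring⟩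

lemma vtx00 {i j : ℕ} (h : VtxC i j 0 0) : i = 0 ∧ j = 0 := by unfold VtxC at h; omega

lemma vtxn0 {n i j : ℕ} (hn : 1 ≤ n) (h : VtxC i j n 0) (hb : i + j ≤ n - 1) :
    i = n - 1 ∧ j = 0 := by unfold VtxC at h; omega

lemma triNum_ge {n : ℕ} (hn : 2 ≤ n) : 3 ≤ triNum n := by
  unfold triNum
  have h6 : 6 ≤ n * (n + 1) := by nlinarith
  omega

lemma finite_len (k : ℕ) : {l : List (Fin 6) | l.length = k}.Finite := by
  induction k with
  | zero =>
      apply Set.Finite.subset (Set.finite_singleton ([] : List (Fin 6)))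
      intro l hl
      simp only [Set.mem_setOf_eq] at hl
      simp [List.length_eq_zero_iff.mp hl]
  | succ k ih =>
      apply Set.Finite.subset (Set.Finite.image2 List.cons Set.finite_univ ih)
      rintro (_ | ⟨hd, tl⟩) hl
      · simp at hl
      · exact Set.mem_image2_of_mem (Set.mem_univ hd) (by simpa using hl)

lemma tile_zero {s : List (Fin 6)} {i j : ℕ} (h0 : posSeq s 0 = 0)
    (h : IsSideOf (edgeSeg s 0) i j) : i = 0 ∧ j = 0 := by
  obtain ⟨a, b, c, d, h1, h2, v1, v2, hne⟩ := side_endpoints h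
  have : Pt a b = Pt 0 0 := by rw [← h1, h0, Pt_zero]
  obtain ⟨ea, eb⟩ := Pt_inj this
  subst ea; subst eb
  exact vtx00 v1

lemma tile_last {n : ℕ} (hn : 1 ≤ n) {s : List (Fin 6)} {i j : ℕ} (hlen : 1 ≤ s.length)
    (hL : posSeq s s.length = (n : ℂ) * dirU 0)
    (h : IsSideOf (edgeSeg s (s.length - 1)) i j) (hb : i + j ≤ n - 1) :
    i = n - 1 ∧ j = 0 := by
  obtain ⟨a, b, c, d, h1, h2, v1, v2, hne⟩ := side_endpoints h
  rw [Nat.sub_add_cancel hlen] at h2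
  have : Pt c d = Pt n 0 := by rw [← h2, hL, Pt_n]
  obtain ⟨ec, ed⟩ := Pt_inj this
  subst ec; subst ed
  exact vtxn0 hn v2 hb

lemma tau_bridge {n : ℕ} {s : List (Fin 6)} {τ : ℕ → ℕ × ℕ}
    (hτ : ∀ m < s.length, (τ m).1 + (τ m).2 ≤ n - 1 ∧
      IsSideOf (edgeSeg s m) (τ m).1 (τ m).2)
    {t : Fin s.length → {p : ℕ × ℕ // p.1 + p.2 ≤ n - 1}}
    (ht : ∀ m : Fin s.length, IsSideOf (edgeSeg s (m : ℕ)) (t m).1.1 (t m).1.2)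
    {m : ℕ} (hm : m < s.length) : τ m = ((t ⟨m, hm⟩ : {p : ℕ × ℕ // p.1 + p.2 ≤ n - 1}) : ℕ × ℕ) := by
  obtain ⟨e1, e2⟩ := sideOf_unique (hτ m hm).2 (ht ⟨m, hm⟩)
  exact Prod.ext e1 e2

lemma tau_inj {n : ℕ} {s : List (Fin 6)} {τ : ℕ → ℕ × ℕ}
    (hτ : ∀ m < s.length, (τ m).1 + (τ m).2 ≤ n - 1 ∧
      IsSideOf (edgeSeg s m) (τ m).1 (τ m).2)
    {t : Fin s.length → {p : ℕ × ℕ // p.1 + p.2 ≤ n - 1}}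
    (ht : ∀ m : Fin s.length, IsSideOf (edgeSeg s (m : ℕ)) (t m).1.1 (t m).1.2)
    (hinj : Function.Injective t)
    {m m' : ℕ} (hm : m < s.length) (hm' : m' < s.length) (he : τ m = τ m') : m = m' := by
  rw [tau_bridge hτ ht hm, tau_bridge hτ ht hm'] at he
  have := hinj (Subtype.ext he)
  simpa using congrArg Fin.val this

end SAux

namespace SAux

lemma derived_isHPath {n : ℕ} (hn : 2 ≤ n) {s w : List (Fin 6)}
    (hs : IsSPath n s) (hd : DerivedWord n s w) : IsHPath n w := by
  obtain ⟨hlen, h0, hL, hdist, t, ht, hbij⟩ := hs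
  obtain ⟨τ, hτ, hwlen, hrec⟩ := hd
  have hL3 : 3 ≤ s.length := hlen ▸ triNum_ge hn
  have hτ0 : τ 0 = (0, 0) := by
    obtain ⟨e1, e2⟩ := tile_zero h0 (hτ 0 (by omega)).2
    exact Prod.ext e1 e2
  have hτlast : τ (s.length - 1) = (n - 1, 0) := by
    obtain ⟨e1, e2⟩ := tile_last (by omega) (by omega) hL
      (hτ (s.length - 1) (by omega)).2 (hτ (s.length - 1) (by omega)).1
    exact Prod.ext e1 e2
  have hpos : ∀ m, m ≤ s.length - 1 → posSeq w m = Pt (τ m).1 (τ m).2 := by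
    intro m
    induction m with
    | zero => intro _; rw [posSeq_zero, hτ0, Pt_zero]
    | succ m ih =>
        intro hm
        have hw : m < w.length := by omega
        rw [posSeq_succ hw, ih (by omega)]
        have hr := hrec m (by omega)
        rw [centroid_shift] at hr
        rw [hr]
  refine ⟨by rw [hwlen, hlen], ?_, ?_, ?_, ?_⟩
  · intro m m' he
    simp only at he
    have hm : (m : ℕ) ≤ s.length - 1 := by have := m.isLt; omega
    have hm' : (m' : ℕ) ≤ s.length - 1 := by have := m'.isLt; omega
    rw [hpos m hm, hpos m' hm'] at he
    obtain ⟨e1, e2⟩ := Pt_inj he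
    have : (m : ℕ) = (m' : ℕ) :=
      tau_inj hτ ht hbij.1 (by omega) (by omega) (Prod.ext e1 e2)
    exact Fin.ext this
  · ext z
    constructor
    · rintro ⟨m, rfl⟩
      have hm : (m : ℕ) ≤ s.length - 1 := by have := m.isLt; omega
      exact ⟨(τ m).1, (τ m).2, (hτ m (by omega)).1, (hpos m hm).symm ▸ (hpos m hm)⟩
    · rintro ⟨i, j, hij, rfl⟩
      obtain ⟨mf, hmf⟩ := hbij.2 ⟨(i, j), hij⟩
      refine ⟨⟨(mf : ℕ), by have := mf.isLt; omega⟩, ?_⟩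
      show posSeq w (mf : ℕ) = Pt i j
      rw [hpos (mf : ℕ) (by have := mf.isLt; omega)]
      have hb := tau_bridge hτ ht mf.isLt
      rw [show (⟨(mf : ℕ), mf.isLt⟩ : Fin s.length) = mf from Fin.ext rfl, hmf] at hb
      rw [hb]
  · rw [posSeq_zero, Pt_zero]
  · have : w.length = s.length - 1 := hwlen
    rw [hpos w.length (by omega), this, hτlast]

lemma derived_exists {n : ℕ} (hn : 2 ≤ n) {s : List (Fin 6)} (hs : IsSPath n s) :
    ∃ w, DerivedWord n s w := by
  classical
  obtain ⟨hlen, h0, hL, hdist, t, ht, hbij⟩ := hs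
  have hL3 : 3 ≤ s.length := hlen ▸ triNum_ge hn
  set τ : ℕ → ℕ × ℕ := fun m =>
    if hm : m < s.length then ((t ⟨m, hm⟩ : {p : ℕ × ℕ // p.1 + p.2 ≤ n - 1}) : ℕ × ℕ)
    else (0, 0) with hτdef
  have hτp : ∀ m < s.length, (τ m).1 + (τ m).2 ≤ n - 1 ∧
      IsSideOf (edgeSeg s m) (τ m).1 (τ m).2 := by
    intro m hm
    simp only [hτdef, dif_pos hm]
    exact ⟨(t ⟨m, hm⟩).2, ht ⟨m, hm⟩⟩
  have hstep : ∀ m, m < s.length - 1 → ∃ d : Fin 6,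
      centroidUp (τ (m + 1)).1 (τ (m + 1)).2 = centroidUp (τ m).1 (τ m).2 + dirU d := by
    intro m hm
    obtain ⟨a, b, c, d, h1, h2, v1, v2, hne⟩ := side_endpoints (hτp m (by omega)).2
    obtain ⟨a', b', c', d', h1', h2', v1', v2', hne'⟩ :=
      side_endpoints (hτp (m + 1) (by omega)).2
    obtain ⟨ec, ed⟩ := Pt_inj (h2.symm.trans h1')
    rw [← ec, ← ed] at v1'
    have hnetile : ¬((τ m).1 = (τ (m + 1)).1 ∧ (τ m).2 = (τ (m + 1)).2) := by
      rintro ⟨e1, e2⟩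
      have : m = m + 1 := tau_inj hτp ht hbij.1 (by omega) (by omega) (Prod.ext e1 e2)
      omega
    obtain ⟨dd, hdd⟩ := move_dir (adj_of_shared v2 v1' hnetile)
    exact ⟨dd, centroid_shift.mpr hdd⟩
  choose! D hD using hstep
  refine ⟨List.ofFn (fun k : Fin (s.length - 1) => D (k : ℕ)), τ, hτp, by simp, ?_⟩
  intro m hm
  have hg : (List.ofFn fun k : Fin (s.length - 1) => D (k : ℕ)).getD m 0 = D m := by
    rw [List.getD_eq_getElem _ _ (by simpa using hm)]
    simp
  rw [hg]
  exact hD m hm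

lemma spath_unique {n : ℕ} (hn : 2 ≤ n) {s₁ s₂ w : List (Fin 6)}
    (hs₁ : IsSPath n s₁) (hs₂ : IsSPath n s₂)
    (hd₁ : DerivedWord n s₁ w) (hd₂ : DerivedWord n s₂ w) : s₁ = s₂ := by
  obtain ⟨hlen₁, h01, hL1, hdist1, t₁, ht₁, hbij₁⟩ := hs₁
  obtain ⟨hlen₂, h02, hL2, hdist2, t₂, ht₂, hbij₂⟩ := hs₂
  obtain ⟨τ₁, hτ₁, hwlen₁, hrec₁⟩ := hd₁
  obtain ⟨τ₂, hτ₂, hwlen₂, hrec₂⟩ := hd₂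
  have hL3 : 3 ≤ s₁.length := hlen₁ ▸ triNum_ge hn
  have hlen12 : s₂.length = s₁.length := by rw [hlen₁, hlen₂]
  rw [hlen12] at hτ₂ hrec₂
  have htau : ∀ m, m < s₁.length → τ₁ m = τ₂ m := by
    intro m
    induction m with
    | zero =>
        intro hm
        obtain ⟨e1, e2⟩ := tile_zero h01 (hτ₁ 0 (by omega)).2
        obtain ⟨e1', e2'⟩ := tile_zero h02 (hτ₂ 0 (by omega)).2
        have a1 : τ₁ 0 = ((0 : ℕ), (0 : ℕ)) := Prod.ext e1 e2
        have a2 : τ₂ 0 = ((0 : ℕ), (0 : ℕ)) := Prod.ext e1' e2'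
        rw [a1, a2]
    | succ m ih =>
        intro hm
        have e1' := hrec₁ m (by omega)
        have e2' := hrec₂ m (by omega)
        rw [ih (by omega)] at e1'
        have hc : centroidUp (τ₁ (m + 1)).1 (τ₁ (m + 1)).2
            = centroidUp (τ₂ (m + 1)).1 (τ₂ (m + 1)).2 := by rw [e1', e2']
        obtain ⟨f1, f2⟩ := centroid_inj hc
        exact Prod.ext f1 f2
  have hpos : ∀ m, m ≤ s₁.length → posSeq s₁ m = posSeq s₂ m := by
    intro m hm
    rcases Nat.lt_or_ge m 1 with hm1 | hm1
    · have : m = 0 := by omega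
      rw [this, posSeq_zero, posSeq_zero]
    rcases Nat.eq_or_lt_of_le hm with hEq | hlt
    · rw [hEq, hL1, show s₁.length = s₂.length from hlen12.symm, hL2]
    · obtain ⟨m', rfl⟩ : ∃ m', m = m' + 1 := ⟨m - 1, by omega⟩
      obtain ⟨a, b, c, d, h1a, h2a, v1a, v2a, hnea⟩ :=
        side_endpoints (hτ₁ m' (by omega)).2
      obtain ⟨a', b', c', d', h1b, h2b, v1b, v2b, hneb⟩ :=
        side_endpoints (hτ₁ (m' + 1) (by omega)).2
      obtain ⟨ec, ed⟩ := Pt_inj (h2a.symm.trans h1b)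
      rw [← ec, ← ed] at v1b
      obtain ⟨A, B, C2, D2, h1c, h2c, v1c, v2c, hnec⟩ :=
        side_endpoints (hτ₂ m' (by omega)).2
      obtain ⟨A', B', C', D', h1d, h2d, v1d, v2d, hned⟩ :=
        side_endpoints (hτ₂ (m' + 1) (by omega)).2
      obtain ⟨eC, eD⟩ := Pt_inj (h2c.symm.trans h1d)
      rw [← eC, ← eD] at v1d
      rw [← htau m' (by omega)] at v2c
      rw [← htau (m' + 1) (by omega)] at v1d
      have hnet : ¬((τ₁ m').1 = (τ₁ (m' + 1)).1 ∧ (τ₁ m').2 = (τ₁ (m' + 1)).2) := by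
        rintro ⟨g1, g2⟩
        have := tau_inj hτ₁ ht₁ hbij₁.1 (show m' < s₁.length by omega) (by omega)
          (Prod.ext g1 g2)
        omega
      obtain ⟨q1, q2⟩ := shared_unique v2a v1b v2c v1d hnet
      rw [h2a, h2c, q1, q2]
  apply List.ext_getElem hlen12.symm
  intro m hm1 hm2
  have d1 : dirU (s₁.getD m 0) = posSeq s₁ (m + 1) - posSeq s₁ m := by
    rw [posSeq_succ hm1]; ring
  have d2 : dirU (s₂.getD m 0) = posSeq s₂ (m + 1) - posSeq s₂ m := by
    rw [posSeq_succ hm2]; ring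
  have hdir : dirU (s₁.getD m 0) = dirU (s₂.getD m 0) := by
    rw [d1, d2, hpos m (by omega), hpos (m + 1) (by omega)]
  have hdd := dirU_inj hdir
  rw [List.getD_eq_getElem _ _ hm1, List.getD_eq_getElem _ _ hm2] at hdd
  exact hdd

end SAux
/-- For every `n ≥ 2`, the map sending an S-path of order `n` to the
Hamiltonian path through the centroids of its consecutively touched dark tiles is
injective; consequently there are at most as many S-paths as H-paths of order `n`. -/
theorem sPath_to_centroid_word_injective (n : ℕ) (hn : 2 ≤ n) :
    (∀ s₁ s₂ w : List (Fin 6), IsSPath n s₁ → IsSPath n s₂ →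
      DerivedWord n s₁ w → DerivedWord n s₂ w → s₁ = s₂) ∧
    Set.ncard {s | IsSPath n s} ≤ Set.ncard {w | IsHPath n w} := by
  constructor
  · intro s₁ s₂ w h1 h2 h3 h4
    exact SAux.spath_unique hn h1 h2 h3 h4
  · classical
    set F : List (Fin 6) → List (Fin 6) := fun s =>
      if h : ∃ w, DerivedWord n s w then h.choose else [] with hF
    have hFd : ∀ s, IsSPath n s → DerivedWord n s (F s) := by
      intro s hs
      have h : ∃ w, DerivedWord n s w := SAux.derived_exists hn hs
      simp only [hF, dif_pos h]
      exact h.choose_spec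
    have hfin : {w | IsHPath n w}.Finite := by
      apply Set.Finite.subset (SAux.finite_len (triNum n - 1))
      intro w hw
      exact hw.1
    exact Set.ncard_le_ncard_of_injOn F
      (fun s hs => SAux.derived_isHPath hn hs (hFd s hs))
      (fun s₁ h₁ s₂ h₂ he => SAux.spath_unique hn h₁ h₂ (hFd s₁ h₁) (he ▸ hFd s₂ h₂))
      hfin
end

section
/- For every n ≥ 2 there exists at least one W-path of order n. -/
/-!
Climb the first column with steps `1`, step `5` to `P(1, n - 2)`, and cover the rest of the
triangle, the image of `G_{n-1}` under the reflection `P(i, j) ↦ P(i + 1, n - 2 - i - j)`, by the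
mirror image of a W-path of order `n - 1`. This reflection fixes the endpoint `P(n - 1, 0)`, acts on
directions as `d ↦ 5 - d`, and maps forbidden turns to forbidden turns. Since it also swaps the
final letters `0` and `5`, the induction carries both supplemented words `0·w·0` and `0·w·5`.
-/

open Complex ComplexConjugate

lemma dirU_eq_exp (d : Fin 6) : dirU d = exp (((d : ℕ) * Real.pi / 3 : ℝ) * I) := by
  simp [dirU]

lemma dirU_zero : dirU 0 = 1 := by simp [dirU]

lemma dirU_one_im_pos : 0 < (dirU 1).im := by
  rw [dirU_eq_exp, exp_ofReal_mul_I_im, show ((1 : Fin 6) : ℕ) = 1 from rfl, Nat.cast_one,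
    one_mul]
  exact Real.sin_pos_of_pos_of_lt_pi (by positivity) (by linarith [Real.pi_pos])

lemma dirU_four : dirU 4 = -dirU 1 := by
  rw [dirU, dirU, ← neg_one_mul, ← exp_pi_mul_I, ← exp_add]
  congr 1
  push_cast [show ((4 : Fin 6) : ℕ) = 4 from rfl, show ((1 : Fin 6) : ℕ) = 1 from rfl]
  ring

lemma dirU_five : dirU 5 = 1 - dirU 1 := by
  have h5 : ((5 : ℕ) * Real.pi / 3 : ℝ) = -(Real.pi / 3) + 2 * Real.pi := by push_cast; ring
  apply Complex.ext <;>
    simp only [dirU_eq_exp, exp_ofReal_mul_I_re, exp_ofReal_mul_I_im, sub_re, sub_im, one_re,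
      one_im, show ((5 : Fin 6) : ℕ) = 5 from rfl, show ((1 : Fin 6) : ℕ) = 1 from rfl, h5,
      Real.cos_add_two_pi, Real.sin_add_two_pi, Real.cos_neg, Real.sin_neg] <;>
    norm_num [Real.cos_pi_div_three]

lemma dirU_rev (d : Fin 6) : dirU d.rev = dirU 5 * conj (dirU d) := by
  have hrev : ((d.rev : ℕ) : ℂ) = 5 - (d : ℕ) := by
    rw [Fin.val_rev, Nat.cast_sub (by omega)]; push_cast; ring
  simp only [dirU]
  rw [← exp_conj, ← exp_add, hrev]
  congr 1
  simp only [map_mul, map_div₀, map_natCast, map_ofNat, conj_ofReal, conj_I,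
    show ((5 : Fin 6) : ℕ) = 5 from rfl]
  push_cast
  ring

lemma Pt_inj {i j i' j' : ℕ} : Pt i j = Pt i' j' ↔ i = i' ∧ j = j' := by
  refine ⟨fun h => ?_, fun h => by rw [h.1, h.2]⟩
  have him := congrArg im h
  have hre := congrArg re h
  simp only [Pt, dirU_zero, add_im, add_re, mul_im, mul_re, natCast_re, natCast_im, one_re,
    one_im] at him hre
  have hj : j = j' := by simpa [dirU_one_im_pos.ne'] using him
  subst hj
  exact ⟨by exact_mod_cast (by simpa using hre : (i : ℝ) = i'), rfl⟩

lemma triNum_succ (m : ℕ) : triNum (m + 1) = triNum m + (m + 1) := by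
  have h2 : 2 ∣ m * (m + 1) := (Nat.even_mul_succ_self m).two_dvd
  have : (m + 1) * (m + 1 + 1) = m * (m + 1) + 2 * (m + 1) := by ring
  unfold triNum
  omega

lemma posSeq_zero (w : List (Fin 6)) : posSeq w 0 = 0 := by simp [posSeq]

lemma posSeq_cons_succ (d : Fin 6) (w : List (Fin 6)) (m : ℕ) :
    posSeq (d :: w) (m + 1) = dirU d + posSeq w m := by
  simp [posSeq]

lemma posSeq_append (w₁ w₂ : List (Fin 6)) (m : ℕ) :
    posSeq (w₁ ++ w₂) m = posSeq w₁ m + posSeq w₂ (m - w₁.length) := by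
  simp [posSeq, List.take_append]

lemma posSeq_replicate (k : ℕ) (d : Fin 6) (m : ℕ) :
    posSeq (List.replicate k d) m = (min m k : ℕ) * dirU d := by
  simp [posSeq, List.take_replicate, List.sum_replicate, nsmul_eq_mul]

lemma posSeq_map (f : Fin 6 → Fin 6) (g : ℂ →+ ℂ) (hfg : ∀ d, dirU (f d) = g (dirU d))
    (w : List (Fin 6)) (m : ℕ) : posSeq (w.map f) m = g (posSeq w m) := by
  simp [posSeq, ← List.map_take, map_list_sum, List.map_map, Function.comp_def, hfg]

noncomputable def reflection : ℂ →+ ℂ :=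
  (AddMonoidHom.mulLeft (dirU 5)).comp (starRingEnd ℂ).toAddMonoidHom

lemma reflection_apply (z : ℂ) : reflection z = dirU 5 * conj z := rfl

lemma posSeq_map_rev (w : List (Fin 6)) (m : ℕ) :
    posSeq (w.map Fin.rev) m = reflection (posSeq w m) :=
  posSeq_map _ _ dirU_rev w m

noncomputable def triReflect (k : ℕ) (z : ℂ) : ℂ := Pt 1 k + reflection z

lemma triReflect_injective (k : ℕ) : Function.Injective (triReflect k) := by
  intro z z' h
  have hu : dirU 5 ≠ 0 := by simp [dirU, Complex.exp_ne_zero]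
  exact (starRingEnd ℂ).injective (by simpa [triReflect, reflection_apply, hu] using h)

lemma triReflect_Pt {k i j : ℕ} (h : i + j ≤ k) :
    triReflect k (Pt i j) = Pt (i + 1) (k - i - j) := by
  have h4 : dirU 5 * conj (dirU 1) = -dirU 1 := by rw [← dirU_rev, ← dirU_four]; rfl
  have hcast : ((k - i - j : ℕ) : ℂ) = k - i - j := by
    rw [Nat.sub_sub, Nat.cast_sub h]; push_cast; ring
  simp only [triReflect, reflection_apply, Pt, dirU_zero, hcast, map_add, map_mul, map_natCast,
    map_one]
  push_cast
  linear_combination (j : ℂ) * h4 + (i : ℂ) * dirU_five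

def zigzag : ℕ → List (Fin 6)
  | 0 => []
  | k + 1 => List.replicate (k + 1) 1 ++ 5 :: (zigzag k).map Fin.rev

lemma length_zigzag_succ (k : ℕ) : (zigzag (k + 1)).length = k + 2 + (zigzag k).length := by
  simp only [zigzag, List.length_append, List.length_replicate, List.length_cons, List.length_map]
  omega

lemma length_zigzag (k : ℕ) : (zigzag k).length + 1 = triNum (k + 1) := by
  induction k with
  | zero => rfl
  | succ k ih => rw [triNum_succ, ← ih, length_zigzag_succ]; omega

lemma posSeq_zigzag_succ_of_le {k m : ℕ} (hm : m ≤ k + 1) :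
    posSeq (zigzag (k + 1)) m = Pt 0 m := by
  rw [zigzag, posSeq_append, posSeq_replicate, List.length_replicate, Nat.sub_eq_zero_of_le hm,
    posSeq_zero, min_eq_left hm]
  simp [Pt]

lemma posSeq_zigzag_succ_add (k r : ℕ) :
    posSeq (zigzag (k + 1)) (k + 2 + r) = triReflect k (posSeq (zigzag k) r) := by
  rw [zigzag, posSeq_append, posSeq_replicate, List.length_replicate,
    show k + 2 + r - (k + 1) = r + 1 by omega, posSeq_cons_succ, posSeq_map_rev,
    min_eq_right (by omega), triReflect, dirU_five, Pt, dirU_zero]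
  push_cast
  ring

noncomputable def trace (w : List (Fin 6)) : List ℂ :=
  (List.range (w.length + 1)).map (posSeq w)

lemma trace_zigzag_succ (k : ℕ) :
    trace (zigzag (k + 1)) =
      (List.range (k + 2)).map (Pt 0) ++ (trace (zigzag k)).map (triReflect k) := by
  rw [trace, length_zigzag_succ, add_assoc, List.range_add, List.map_append, List.map_map, trace,
    List.map_map]
  congr 1
  · exact List.map_congr_left fun m hm =>
      posSeq_zigzag_succ_of_le (by simpa [Nat.lt_succ_iff] using hm)
  · exact List.map_congr_left fun r _ => posSeq_zigzag_succ_add k r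

lemma posSeq_zigzag_length (k : ℕ) : posSeq (zigzag k) (zigzag k).length = Pt k 0 := by
  induction k with
  | zero => simp [zigzag, posSeq_zero, Pt]
  | succ k ih =>
    rw [length_zigzag_succ, posSeq_zigzag_succ_add, ih, triReflect_Pt (Nat.add_zero k).le,
      Nat.sub_self]

lemma mem_inscribedGrid_add_two {k : ℕ} {z : ℂ} :
    z ∈ inscribedGrid (k + 2) ↔
      (∃ j ≤ k + 1, Pt 0 j = z) ∨ ∃ y ∈ inscribedGrid (k + 1), triReflect k y = z := by
  simp only [inscribedGrid, Set.mem_ofPred_eq, Nat.add_sub_cancel]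
  constructor
  · rintro ⟨_ | i, j, hij, rfl⟩
    · exact Or.inl ⟨j, by omega, rfl⟩
    · refine Or.inr ⟨Pt i (k - i - j), ⟨i, k - i - j, by omega, rfl⟩, ?_⟩
      rw [triReflect_Pt (by omega), show k - i - (k - i - j) = j by omega]
  · rintro (⟨j, hj, rfl⟩ | ⟨_, ⟨i, j, hij, rfl⟩, rfl⟩)
    · exact ⟨0, j, by omega, rfl⟩
    · exact ⟨i + 1, k - i - j, by omega, triReflect_Pt hij⟩

lemma mem_trace_zigzag {k : ℕ} {z : ℂ} :
    z ∈ trace (zigzag k) ↔ z ∈ inscribedGrid (k + 1) := by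
  induction k generalizing z with
  | zero => simp [trace, zigzag, posSeq_zero, inscribedGrid, Pt]
  | succ k ih =>
    rw [trace_zigzag_succ, List.mem_append, mem_inscribedGrid_add_two]
    simp [ih, Nat.lt_succ_iff]

lemma nodup_trace_zigzag (k : ℕ) : (trace (zigzag k)).Nodup := by
  induction k with
  | zero => simp [trace, zigzag]
  | succ k ih =>
    rw [trace_zigzag_succ, List.nodup_append]
    refine ⟨List.nodup_range.map fun _ _ h => (Pt_inj.mp h).2,
      ih.map (triReflect_injective k), ?_⟩
    simp only [List.mem_map, mem_trace_zigzag]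
    rintro _ ⟨j, -, rfl⟩ _ ⟨_, ⟨i, j', hij, rfl⟩, rfl⟩ h
    rw [triReflect_Pt (by simpa using hij), Pt_inj] at h
    omega

lemma isHPath_of_trace {n : ℕ} {w : List (Fin 6)} (hlen : w.length + 1 = triNum n)
    (hnodup : (trace w).Nodup) (hmem : ∀ z, z ∈ trace w ↔ z ∈ inscribedGrid n)
    (hend : posSeq w w.length = Pt (n - 1) 0) : IsHPath n w := by
  have hofFn : List.ofFn (fun m : Fin (w.length + 1) => posSeq w m) = trace w := by
    rw [List.ofFn_eq_map, trace, ← List.map_coe_finRange_eq_range, List.map_map]; rfl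
  refine ⟨by omega, List.nodup_ofFn.mp (hofFn ▸ hnodup), Set.ext fun z => ?_, by
    simp [posSeq_zero, Pt], hend⟩
  rw [← List.mem_ofFn', hofFn, hmem]

lemma isHPath_zigzag (k : ℕ) : IsHPath (k + 1) (zigzag k) :=
  isHPath_of_trace (length_zigzag k) (nodup_trace_zigzag k) (fun _ => mem_trace_zigzag)
    (posSeq_zigzag_length k)

instance : DecidableRel ForbiddenTurn := fun a b => by unfold ForbiddenTurn; infer_instance

lemma forbiddenTurn_rev {a b : Fin 6} : ForbiddenTurn a.rev b.rev ↔ ForbiddenTurn a b := by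
  revert a b; decide

lemma List.isChain_cons_replicate_append {α : Type*} {R : α → α → Prop} {a b c : α}
    (hab : R a b) (hbb : R b b) (hbc : R b c) (k : ℕ) :
    List.IsChain R (a :: List.replicate (k + 1) b ++ [c]) := by
  induction k generalizing a with
  | zero => simp [hab, hbc]
  | succ k ih => exact List.IsChain.cons_cons hab (ih hbb)

lemma isChain_zigzag (k : ℕ) {e : Fin 6} (he : e = 0 ∨ e = 5) :
    List.IsChain (¬ ForbiddenTurn · ·) (0 :: zigzag k ++ [e]) := by
  induction k generalizing e with
  | zero => rcases he with rfl | rfl <;> decide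
  | succ k ih =>
    have hcol : List.IsChain (¬ ForbiddenTurn · ·) ((0 :: List.replicate (k + 1) 1) ++ [5]) :=
      List.isChain_cons_replicate_append (by decide) (by decide) (by decide) k
    have hrest :
        List.IsChain (¬ ForbiddenTurn · ·) ([5] ++ ((zigzag k).map Fin.rev ++ [e])) := by
      have he' : e.rev = 0 ∨ e.rev = 5 := by rcases he with rfl | rfl <;> decide
      have hmirror := List.isChain_map_of_isChain (S := (¬ ForbiddenTurn · ·)) Fin.rev
        (fun _ _ => forbiddenTurn_rev.not.mpr) (ih he')
      simpa using hmirror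
    simpa [zigzag] using hcol.append_overlap hrest (List.cons_ne_nil _ _)

lemma isWPath_zigzag (k : ℕ) : IsWPath (k + 1) (zigzag k) :=
  ⟨isHPath_zigzag k, isChain_zigzag k (Or.inl rfl)⟩

theorem exists_wPath_general (n : ℕ) : ∃ w : List (Fin 6), IsWPath n w := by
  obtain _ | k := n
  · -- `IsWPath 0` and `IsWPath 1` agree, as `0 - 1 = 0` in `ℕ`.
    exact ⟨[], isWPath_zigzag 0⟩
  · exact ⟨zigzag k, isWPath_zigzag k⟩

/-- For every `n ≥ 2` there exists at least one W-path of order `n`. -/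
theorem exists_wPath (n : ℕ) (hn : 2 ≤ n) : ∃ w : List (Fin 6), IsWPath n w :=
  exists_wPath_general n
end
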